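/- arXiv:0807.4123 — 3 statements merged into one kernel-verified Lean document; each statement's English description precedes it below -/
import Mathlib

section
/- Let V be a commutative unital quantale and Φ a class of V-distributors satisfying (Ax1)–(Ax3). For every V-functor f : (X,a) → (Y,b), the V-functor Φf : ΦX → ΦY is the (y^Φ_X)_*-weighted colimit of y^Φ_Y ∘ f; that is, (Φf)_* = ((y^Φ_Y)_* ∘ f_*) ⟜ (y^Φ_X)_* as distributors ΦX ⇸ ΦY. -/
universe u

/-- A commutative unital quantale: a complete lattice with a commutative monoid
structure whose multiplication distributes over arbitrary suprema. -/
class CommQuantale (V : Type u) extends CompleteLattice V, CommMonoid V where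
  mul_sSup : ∀ (x : V) (s : Set V), x * sSup s = ⨆ v ∈ s, x * v

variable {V : Type u} [CommQuantale V]

/-- The internal hom of the quantale: `qhom u v = sSup {w | u * w ≤ v}`. -/
def qhom (u v : V) : V := sSup {w | u * w ≤ v}

theorem mul_iSup' {ι : Sort*} (u : V) (v : ι → V) : u * (⨆ i, v i) = ⨆ i, u * v i := by
  rw [iSup, CommQuantale.mul_sSup, iSup_range]

theorem mul_mono_right' (u : V) {w w' : V} (h : w ≤ w') : u * w ≤ u * w' := by
  have hs : sSup ({w, w'} : Set V) = w' := by
    apply le_antisymm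
    · exact sSup_le (by rintro x (rfl | rfl); exacts [h, le_rfl])
    · exact le_sSup (by simp)
  have hm := CommQuantale.mul_sSup u ({w, w'} : Set V)
  rw [hs] at hm
  rw [hm]
  exact le_iSup₂ (f := fun v (_ : v ∈ ({w, w'} : Set V)) => u * v) w (by simp)

theorem mul_mono_left' {w w' : V} (h : w ≤ w') (u : V) : w * u ≤ w' * u := by
  rw [mul_comm w u, mul_comm w' u]; exact mul_mono_right' u h

theorem le_qhom_iff {u v w : V} : w ≤ qhom u v ↔ u * w ≤ v := by
  constructor
  · intro h
    have h2 : u * qhom u v ≤ v := by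
      rw [qhom, CommQuantale.mul_sSup]
      exact iSup₂_le fun w hw => hw
    exact le_trans (mul_mono_right' u h) h2
  · intro h; exact le_sSup h

theorem bot_mul' (u : V) : (⊥ : V) * u = ⊥ := by
  rw [mul_comm]
  have hm := CommQuantale.mul_sSup u (∅ : Set V)
  simpa using hm

/-- A `V`-category structure on `X`. -/
structure VCatStr (V : Type u) [CommQuantale V] (X : Type u) where
  hom : X → X → V
  refl : ∀ x, (1 : V) ≤ hom x x
  comp : ∀ x y z, hom x y * hom y z ≤ hom x z

/-- `V`-functoriality. -/
def IsVFunctor {X Y : Type u} (a : VCatStr V X) (b : VCatStr V Y) (f : X → Y) : Prop :=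
  ∀ x x', a.hom x x' ≤ b.hom (f x) (f x')

/-- `φ` is a `V`-distributor `(X,a) ⇸ (Y,b)`. -/
def IsDist {X Y : Type u} (a : VCatStr V X) (b : VCatStr V Y) (φ : X → Y → V) : Prop :=
  (∀ x' x y, a.hom x' x * φ x y ≤ φ x' y) ∧ (∀ x y y', φ x y * b.hom y y' ≤ φ x y')

/-- Composite `ψ ∘ φ` of distributors (`φ` first). -/
def dComp {X Y Z : Type u} (ψ : Y → Z → V) (φ : X → Y → V) : X → Z → V :=
  fun x z => ⨆ y, φ x y * ψ y z

/-- The extension `γ ⟜ α`. -/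
def dExt {X Y Z : Type u} (γ : X → Z → V) (α : X → Y → V) : Y → Z → V :=
  fun y z => ⨅ x, qhom (α x y) (γ x z)

/-- `f_*`. -/
def fStar {X Y : Type u} (b : VCatStr V Y) (f : X → Y) : X → Y → V :=
  fun x y => b.hom (f x) y

/-- `f^*`. -/
def fCostar {X Y : Type u} (b : VCatStr V Y) (f : X → Y) : Y → X → V :=
  fun y x => b.hom y (f x)

/-- `ψ ⊣ φ` is an adjunction of distributors, `ψ : (A,α) ⇸ (B,β)`, `φ : (B,β) ⇸ (A,α)`. -/
def DistAdj {A B : Type u} (α : VCatStr V A) (β : VCatStr V B)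
    (ψ : A → B → V) (φ : B → A → V) : Prop :=
  (∀ x x', α.hom x x' ≤ ⨆ y, ψ x y * φ y x') ∧
  (∀ y y', (⨆ x, φ y x * ψ x y') ≤ β.hom y y')

/-- `φ : (B,β) ⇸ (A,α)` is a right adjoint distributor. -/
def IsRightAdjDist {A B : Type u} (β : VCatStr V B) (α : VCatStr V A) (φ : B → A → V) : Prop :=
  ∃ ψ : A → B → V, IsDist α β ψ ∧ DistAdj α β ψ φ

/-- The pointwise order on `V`-functors. -/
def VLe {X Y : Type u} (b : VCatStr V Y) (f g : X → Y) : Prop :=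
  ∀ x, (1 : V) ≤ b.hom (f x) (g x)

/-- Equivalence of `V`-functors. -/
def VEquiv {X Y : Type u} (b : VCatStr V Y) (f g : X → Y) : Prop :=
  VLe b f g ∧ VLe b g f

def FullyFaithful {X Y : Type u} (a : VCatStr V X) (b : VCatStr V Y) (f : X → Y) : Prop :=
  ∀ x x', b.hom (f x) (f x') = a.hom x x'

def DenseF {X Y : Type u} (b : VCatStr V Y) (f : X → Y) : Prop :=
  ∀ y y', (⨆ x, b.hom y (f x) * b.hom (f x) y') = b.hom y y'

/-- `f` is a left adjoint `V`-functor. -/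
def LeftAdjointF {X Y : Type u} (a : VCatStr V X) (b : VCatStr V Y) (f : X → Y) : Prop :=
  ∃ g : Y → X, IsVFunctor b a g ∧ (∀ x, (1 : V) ≤ a.hom x (g (f x))) ∧
    (∀ y, (1 : V) ≤ b.hom (f (g y)) y)

/-- The one-point `V`-category `G`. -/
def unitCat (V : Type u) [CommQuantale V] : VCatStr V PUnit where
  hom _ _ := 1
  refl _ := le_refl 1
  comp _ _ _ := (one_mul 1).le

/-- Presheaves on `(X,a)`: distributors `(X,a) ⇸ G`. -/
def IsPresheaf {X : Type u} (a : VCatStr V X) (ψ : X → V) : Prop :=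
  ∀ x' x, a.hom x' x * ψ x ≤ ψ x'

/-- A class of `V`-distributors: for each pair of `V`-categories a predicate on maps. -/
def DistClass (V : Type u) [CommQuantale V] : Type (u + 1) :=
  ∀ ⦃X Y : Type u⦄, VCatStr V X → VCatStr V Y → (X → Y → V) → Prop

/-- The presheaf `ψ`, seen as distributor into `G`, lies in `Φ`. -/
def InPhi (Φ : DistClass V) {X : Type u} (a : VCatStr V X) (ψ : X → V) : Prop :=
  Φ a (unitCat V) (fun x _ => ψ x)

/-- Axioms (Ax1)–(Ax3) on a class of distributors. -/
structure DistAx (Φ : DistClass V) : Prop where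
  ax1 : ∀ {X Y : Type u} (a : VCatStr V X) (b : VCatStr V Y) (f : X → Y),
      IsVFunctor a b f → Φ b a (fCostar b f)
  ax2_left : ∀ {W X Y : Type u} (d : VCatStr V W) (a : VCatStr V X) (b : VCatStr V Y)
      (φ : W → Y → V) (f : X → Y), IsDist d b φ → IsVFunctor a b f → Φ d b φ →
      Φ d a (dComp (fCostar b f) φ)
  ax2_right : ∀ {X Y Z : Type u} (a : VCatStr V X) (b : VCatStr V Y) (c : VCatStr V Z)
      (φ : X → Z → V) (f : X → Y), IsDist a c φ → IsVFunctor a b f → Φ a c φ →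
      Φ b c (dComp φ (fCostar b f))
  ax2_star : ∀ {W X Z : Type u} (d : VCatStr V W) (a : VCatStr V X) (c : VCatStr V Z)
      (φ : X → Z → V) (f : W → X), IsDist a c φ → IsVFunctor d a f → Φ a c φ →
      Φ d a (fStar a f) → Φ d c (dComp φ (fStar a f))
  ax3 : ∀ {X Y : Type u} (a : VCatStr V X) (b : VCatStr V Y) (φ : X → Y → V),
      IsDist a b φ → (∀ y, Φ a (unitCat V) (fun x _ => φ x y)) → Φ a b φ

/-- Axiom (Ax4): `f_* ∈ Φ` for every surjective `V`-functor `f`. -/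
def Ax4 (Φ : DistClass V) : Prop :=
  ∀ {X Y : Type u} (a : VCatStr V X) (b : VCatStr V Y) (f : X → Y),
    IsVFunctor a b f → Function.Surjective f → Φ a b (fStar b f)

/-- `f` is `Φ`-dense. -/
def PhiDense (Φ : DistClass V) {X Y : Type u} (a : VCatStr V X) (b : VCatStr V Y)
    (f : X → Y) : Prop :=
  Φ a b (fStar b f)

/-- The `V`-category structure on `X → V`. -/
def funCat (V : Type u) [CommQuantale V] (X : Type u) : VCatStr V (X → V) where
  hom ψ ψ' := ⨅ x, qhom (ψ x) (ψ' x)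
  refl ψ := le_iInf fun x => le_qhom_iff.mpr (mul_one _).le
  comp ψ χ ω := le_iInf fun x => le_qhom_iff.mpr <| by
    calc ψ x * ((⨅ x', qhom (ψ x') (χ x')) * (⨅ x', qhom (χ x') (ω x')))
        = (ψ x * (⨅ x', qhom (ψ x') (χ x'))) * (⨅ x', qhom (χ x') (ω x')) :=
          (mul_assoc _ _ _).symm
      _ ≤ χ x * (⨅ x', qhom (χ x') (ω x')) :=
          mul_mono_left' (le_qhom_iff.mp (iInf_le (fun x' => qhom (ψ x') (χ x')) x)) _
      _ ≤ ω x := le_qhom_iff.mp (iInf_le (fun x' => qhom (χ x') (ω x')) x)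

/-- Full sub-`V`-category on a predicate. -/
def subCat {X : Type u} (a : VCatStr V X) (P : X → Prop) : VCatStr V {x : X // P x} where
  hom x y := a.hom x.1 y.1
  refl x := a.refl x.1
  comp x y z := a.comp x.1 y.1 z.1

/-- Carrier of the presheaf `V`-category `PX`. -/
def PCarrier {X : Type u} (a : VCatStr V X) : Type u := {ψ : X → V // IsPresheaf a ψ}

/-- The presheaf `V`-category `PX`. -/
def pCat {X : Type u} (a : VCatStr V X) : VCatStr V (PCarrier a) :=
  subCat (funCat V X) (IsPresheaf a)

/-- Carrier of `ΦX`: presheaves lying in `Φ`. -/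
def PhiCarrier (Φ : DistClass V) {X : Type u} (a : VCatStr V X) : Type u :=
  {ψ : X → V // IsPresheaf a ψ ∧ InPhi Φ a ψ}

/-- The `V`-category `ΦX`. -/
def phiCat (Φ : DistClass V) {X : Type u} (a : VCatStr V X) : VCatStr V (PhiCarrier Φ a) :=
  subCat (funCat V X) fun ψ => IsPresheaf a ψ ∧ InPhi Φ a ψ

/-- The inclusion `ΦX → PX`. -/
def phiIncl (Φ : DistClass V) {X : Type u} (a : VCatStr V X) : PhiCarrier Φ a → PCarrier a :=
  fun ψ => ⟨ψ.1, ψ.2.1⟩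

/-- The corestricted Yoneda functor `y^Φ_X : X → ΦX`. -/
def yPhi (Φ : DistClass V) (hΦ : DistAx Φ) {X : Type u} (a : VCatStr V X) (x : X) :
    PhiCarrier Φ a :=
  ⟨fun x' => a.hom x' x,
   fun x' x'' => a.comp x' x'' x,
   hΦ.ax1 (unitCat V) a (fun _ => x) (fun _ _ => a.refl x)⟩

/-- `Φf : ΦX → ΦY`, `ψ ↦ ψ ∘ f^*`. -/
def phiMap (Φ : DistClass V) (hΦ : DistAx Φ) {X Y : Type u} (a : VCatStr V X) (b : VCatStr V Y)
    (f : X → Y) (hf : IsVFunctor a b f) (ψ : PhiCarrier Φ a) : PhiCarrier Φ b :=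
  ⟨fun y => ⨆ x, b.hom y (f x) * ψ.1 x,
   by
    intro y' y
    rw [mul_iSup']
    refine iSup_le fun x => ?_
    refine le_trans ?_ (le_iSup _ x)
    calc b.hom y' y * (b.hom y (f x) * ψ.1 x)
        = (b.hom y' y * b.hom y (f x)) * ψ.1 x := (mul_assoc _ _ _).symm
      _ ≤ b.hom y' (f x) * ψ.1 x := mul_mono_left' (b.comp y' y (f x)) _,
   by
    have hd : IsDist a (unitCat V) (fun x (_ : PUnit) => ψ.1 x) :=
      ⟨fun x' x _ => ψ.2.1 x' x, fun x _ _ => le_of_eq (mul_one _)⟩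
    exact hΦ.ax2_right a b (unitCat V) _ f hd hf ψ.2.2⟩

/-- `g` is the `φ`-weighted colimit of `h`, i.e. `g_* = h_* ⟜ φ`. -/
def IsColimit {Y Z X : Type u} (_b : VCatStr V Y) (_c : VCatStr V Z) (a : VCatStr V X)
    (φ : Y → Z → V) (h : Y → X) (g : Z → X) : Prop :=
  ∀ z x, a.hom (g z) x = ⨅ y, qhom (φ y z) (a.hom (h y) x)

/-- `Φ`-cocompleteness. -/
def PhiCocomplete (Φ : DistClass V) {X : Type u} (a : VCatStr V X) : Prop :=
  ∀ ⦃Y Z : Type u⦄ (b : VCatStr V Y) (c : VCatStr V Z) (φ : Y → Z → V) (h : Y → X),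
    IsDist b c φ → Φ b c φ → IsVFunctor b a h →
    ∃ g : Z → X, IsVFunctor c a g ∧ IsColimit b c a φ h g

/-- `Φ`-cocontinuity. -/
def PhiCocontinuous (Φ : DistClass V) {X X' : Type u} (a : VCatStr V X) (a' : VCatStr V X')
    (f : X → X') : Prop :=
  ∀ ⦃Y Z : Type u⦄ (b : VCatStr V Y) (c : VCatStr V Z) (φ : Y → Z → V) (h : Y → X) (g : Z → X),
    IsDist b c φ → Φ b c φ → IsVFunctor b a h → IsVFunctor c a g →
    IsColimit b c a φ h g → IsColimit b c a' φ (f ∘ h) (f ∘ g)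

/-- `Φ`-injectivity. -/
def PhiInjective (Φ : DistClass V) {X : Type u} (a : VCatStr V X) : Prop :=
  ∀ ⦃A B : Type u⦄ (α : VCatStr V A) (β : VCatStr V B) (f : A → X) (i : A → B),
    IsVFunctor α a f → IsVFunctor α β i → FullyFaithful α β i → PhiDense Φ α β i →
    ∃ g : B → X, IsVFunctor β a g ∧ VEquiv a (g ∘ i) f

/-- Separatedness. -/
def Separated {X : Type u} (a : VCatStr V X) : Prop :=
  ∀ ⦃Y : Type u⦄ (b : VCatStr V Y) (f g : Y → X),
    IsVFunctor b a f → IsVFunctor b a g → VEquiv a f g → f = g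

/-! The weight `(y^Φ_X)_*` evaluated at `ψ` is `ψ` itself and `(y^Φ_Y)_* ∘ f_*` evaluated at `θ` is
`θ ∘ f` (Yoneda), so the claim says `[ψ ∘ f^*, θ] = [ψ, θ ∘ f]`: the left Kan extension
`ψ ↦ ψ ∘ f^*` is left adjoint to restriction along `f`, which follows from the quantale laws
`hom(⨆ uᵢ, v) = ⨅ hom(uᵢ, v)` and `hom(u ⊗ w, v) = hom(w, hom(u, v))`. -/

theorem qhom_iSup_left {ι : Sort*} (u : ι → V) (v : V) :
    qhom (⨆ i, u i) v = ⨅ i, qhom (u i) v :=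
  eq_of_forall_le_iff fun w => by
    simp only [le_qhom_iff, le_iInf_iff, mul_comm _ w, mul_iSup', iSup_le_iff]

theorem qhom_iInf_right {ι : Sort*} (u : V) (v : ι → V) :
    qhom u (⨅ i, v i) = ⨅ i, qhom u (v i) :=
  eq_of_forall_le_iff fun w => by simp only [le_qhom_iff, le_iInf_iff]

theorem qhom_mul_left (u w v : V) : qhom (u * w) v = qhom w (qhom u v) :=
  eq_of_forall_le_iff fun t => by simp only [le_qhom_iff, mul_assoc]

section Presheaf

variable {X : Type u} {a : VCatStr V X} {ψ : X → V}

theorem funCat_hom_yoneda (hψ : IsPresheaf a ψ) (x : X) :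
    (funCat V X).hom (fun x' => a.hom x' x) ψ = ψ x := by
  refine le_antisymm ?_ (le_iInf fun x' => le_qhom_iff.mpr (hψ x' x))
  calc (funCat V X).hom (fun x' => a.hom x' x) ψ ≤ qhom (a.hom x x) (ψ x) := iInf_le _ x
    _ = 1 * qhom (a.hom x x) (ψ x) := (one_mul _).symm
    _ ≤ a.hom x x * qhom (a.hom x x) (ψ x) := mul_mono_left' (a.refl x) _
    _ ≤ ψ x := le_qhom_iff.mp le_rfl

theorem iSup_hom_mul_eq (hψ : IsPresheaf a ψ) (x : X) : ⨆ x', a.hom x x' * ψ x' = ψ x := by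
  refine le_antisymm (iSup_le fun x' => hψ x x') (le_iSup_of_le x ?_)
  calc ψ x = 1 * ψ x := (one_mul _).symm
    _ ≤ a.hom x x * ψ x := mul_mono_left' (a.refl x) _

theorem phiCat_hom_yPhi (Φ : DistClass V) (hΦ : DistAx Φ) (x : X) (θ : PhiCarrier Φ a) :
    (phiCat Φ a).hom (yPhi Φ hΦ a x) θ = θ.1 x :=
  funCat_hom_yoneda θ.2.1 x

end Presheaf

theorem funCat_hom_lan_eq {X Y : Type u} (b : VCatStr V Y) (f : X → Y) (ψ : X → V)
    {θ : Y → V} (hθ : IsPresheaf b θ) :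
    (funCat V Y).hom (fun y => ⨆ x, b.hom y (f x) * ψ x) θ = (funCat V X).hom ψ (θ ∘ f) := by
  calc ⨅ y, qhom (⨆ x, b.hom y (f x) * ψ x) (θ y)
      = ⨅ y, ⨅ x, qhom (ψ x) (qhom (b.hom y (f x)) (θ y)) := by
        simp only [qhom_iSup_left, qhom_mul_left]
    _ = ⨅ x, qhom (ψ x) ((funCat V Y).hom (fun y => b.hom y (f x)) θ) := by
        rw [iInf_comm]
        simp only [funCat, qhom_iInf_right]
    _ = ⨅ x, qhom (ψ x) (θ (f x)) := by simp only [funCat_hom_yoneda hθ]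

/-- `(Φf)_* = ((y^Φ_Y)_* ∘ f_*) ⟜ (y^Φ_X)_*`, i.e. `Φf ≅ colim((y^Φ_X)_*, y^Φ_Y ∘ f)`. -/
theorem stmt12 (Φ : DistClass V) (hΦ : DistAx Φ) {X Y : Type u}
    (a : VCatStr V X) (b : VCatStr V Y) (f : X → Y) (hf : IsVFunctor a b f) :
    fStar (phiCat Φ b) (phiMap Φ hΦ a b f hf) =
      dExt (dComp (fStar (phiCat Φ b) (yPhi Φ hΦ b)) (fStar b f))
        (fStar (phiCat Φ a) (yPhi Φ hΦ a)) := by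
  funext ψ θ
  have hweight : ∀ x, fStar (phiCat Φ a) (yPhi Φ hΦ a) x ψ = ψ.1 x :=
    fun x => phiCat_hom_yPhi Φ hΦ x ψ
  have hcomp : ∀ x, dComp (fStar (phiCat Φ b) (yPhi Φ hΦ b)) (fStar b f) x θ = θ.1 (f x) := by
    intro x
    simp only [dComp, fStar, phiCat_hom_yPhi]
    exact iSup_hom_mul_eq θ.2.1 (f x)
  simp only [dExt, hweight, hcomp]
  exact funCat_hom_lan_eq b f ψ.1 θ.2.1
end

section
/- Let V be a commutative unital quantale, Φ a class of V-distributors satisfying (Ax1)–(Ax3), and f : (X,a) → (Y,b) a V-functor between Φ-cocomplete V-categories, with Sup^Φ_X : ΦX → X and Sup^Φ_Y : ΦY → Y left adjoint left inverses of y^Φ_X and y^Φ_Y respectively. Then f is Φ-cocontinuous if and only if f ∘ Sup^Φ_X ≅ Sup^Φ_Y ∘ Φf. -/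
/-!
`Sup^Φ_X ψ` is the `ψ`-weighted colimit of the identity of `X`, and by a Yoneda computation
`Sup^Φ_Y (Φf ψ)` is the `ψ`-weighted colimit of `f`. Conversely every colimit of `h` weighted by
`φ ∈ Φ` is, at `z`, the supremum of the presheaf `(φ ∘ h^*)(-, z) ∈ ΦX`. Hence `f` preserves
all `Φ`-weighted colimits iff it preserves the suprema `Sup^Φ_X ψ`, i.e. iff
`f ∘ Sup^Φ_X ≅ Sup^Φ_Y ∘ Φf`.
-/

universe u

variable {V : Type u} [CommQuantale V]

section Quantale

variable {V : Type u} [CommQuantale V]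

theorem mul_qhom_le (u v : V) : u * qhom u v ≤ v := le_qhom_iff.mp le_rfl

theorem qhom_anti_left {u u' : V} (h : u ≤ u') (v : V) : qhom u' v ≤ qhom u v :=
  le_qhom_iff.mpr ((mul_mono_left' h _).trans (mul_qhom_le u' v))

theorem iSup_mul' {ι : Sort*} (u : V) (v : ι → V) : (⨆ i, v i) * u = ⨆ i, v i * u := by
  rw [mul_comm, mul_iSup']
  exact iSup_congr fun i => mul_comm _ _

end Quantale

namespace VCatStr

variable {V : Type u} [CommQuantale V] {X : Type u} (a : VCatStr V X)

theorem hom_le_hom_of_one_le {u u' : X} (h : (1 : V) ≤ a.hom u' u) (x : X) :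
    a.hom u x ≤ a.hom u' x :=
  calc a.hom u x = 1 * a.hom u x := (one_mul _).symm
    _ ≤ a.hom u' u * a.hom u x := mul_mono_left' h _
    _ ≤ a.hom u' x := a.comp _ _ _

theorem hom_eq_of_iso {u u' : X} (h : (1 : V) ≤ a.hom u u') (h' : (1 : V) ≤ a.hom u' u)
    (x : X) : a.hom u x = a.hom u' x :=
  le_antisymm (a.hom_le_hom_of_one_le h' x) (a.hom_le_hom_of_one_le h x)

theorem one_le_hom_of_hom_eq {u u' : X} (h : ∀ x, a.hom u x = a.hom u' x) :
    (1 : V) ≤ a.hom u' u :=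
  (a.refl u).trans (h u).le

theorem isPresheaf_hom (x : X) : IsPresheaf a (fun x' => a.hom x' x) :=
  fun x' x'' => a.comp x' x'' x

end VCatStr

section Distributors

variable {V : Type u} [CommQuantale V] {X Y Z : Type u}

theorem vEquiv_iff_hom_eq (b : VCatStr V Y) (f g : X → Y) :
    VEquiv b f g ↔ ∀ x y, b.hom (f x) y = b.hom (g x) y :=
  ⟨fun h x => b.hom_eq_of_iso (h.1 x) (h.2 x),
    fun h => ⟨fun x => b.one_le_hom_of_hom_eq fun y => (h x y).symm,
      fun x => b.one_le_hom_of_hom_eq (h x)⟩⟩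

theorem IsVFunctor.hom_map_eq_of_hom_eq {a : VCatStr V X} {b : VCatStr V Y} {f : X → Y}
    (hf : IsVFunctor a b f) {u u' : X} (h : ∀ x, a.hom u x = a.hom u' x) (y : Y) :
    b.hom (f u) y = b.hom (f u') y :=
  b.hom_eq_of_iso ((a.one_le_hom_of_hom_eq fun x => (h x).symm).trans (hf _ _))
    ((a.one_le_hom_of_hom_eq h).trans (hf _ _)) y

theorem IsPresheaf.comp {a : VCatStr V X} {b : VCatStr V Y} {T : Y → V}
    (hT : IsPresheaf b T) {f : X → Y} (hf : IsVFunctor a b f) : IsPresheaf a (T ∘ f) :=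
  fun x' x => (mul_mono_left' (hf x' x) _).trans (hT _ _)

theorem IsPresheaf.isDist {a : VCatStr V X} {ψ : X → V} (hψ : IsPresheaf a ψ) :
    IsDist a (unitCat V) (fun x (_ : PUnit) => ψ x) :=
  ⟨fun x' x _ => hψ x' x, fun _ _ _ => (mul_one _).le⟩

/-- Extending a presheaf `T` along `B ∘ h^*` is extending `T ∘ h` along `B`. -/
theorem IsPresheaf.iInf_qhom_iSup_mul {a : VCatStr V X} {T : X → V} (hT : IsPresheaf a T)
    {I : Type u} (h : I → X) (B : I → V) :
    (⨅ x, qhom (⨆ i, a.hom x (h i) * B i) (T x)) = ⨅ i, qhom (B i) (T (h i)) := by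
  apply le_antisymm
  · refine le_iInf fun i => (iInf_le _ (h i)).trans (qhom_anti_left ?_ _)
    calc B i = 1 * B i := (one_mul _).symm
      _ ≤ a.hom (h i) (h i) * B i := mul_mono_left' (a.refl _) _
      _ ≤ ⨆ i', a.hom (h i) (h i') * B i' := le_iSup (fun i' => a.hom (h i) (h i') * B i') i
  · refine le_iInf fun x => le_qhom_iff.mpr ?_
    rw [iSup_mul']
    refine iSup_le fun i => ?_
    calc a.hom x (h i) * B i * (⨅ i', qhom (B i') (T (h i')))
        = a.hom x (h i) * (B i * (⨅ i', qhom (B i') (T (h i')))) := mul_assoc _ _ _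
      _ ≤ a.hom x (h i) * T (h i) :=
          mul_mono_right' _ ((mul_mono_right' _ (iInf_le _ i)).trans (mul_qhom_le _ _))
      _ ≤ T x := hT x (h i)

theorem IsDist.comp_fCostar {a : VCatStr V X} {b : VCatStr V Y} {c : VCatStr V Z}
    {φ : Y → Z → V} (hφ : IsDist b c φ) (h : Y → X) :
    IsDist a c (dComp φ (fCostar a h)) := by
  refine ⟨fun x' x z => ?_, fun x z z' => ?_⟩
  · rw [dComp, mul_iSup']
    refine iSup_le fun y => le_trans ?_ (le_iSup _ y)
    calc a.hom x' x * (a.hom x (h y) * φ y z)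
        = a.hom x' x * a.hom x (h y) * φ y z := (mul_assoc _ _ _).symm
      _ ≤ a.hom x' (h y) * φ y z := mul_mono_left' (a.comp _ _ _) _
  · rw [dComp, iSup_mul']
    refine iSup_le fun y => le_trans ?_ (le_iSup _ y)
    calc a.hom x (h y) * φ y z * c.hom z z'
        = a.hom x (h y) * (φ y z * c.hom z z') := mul_assoc _ _ _
      _ ≤ a.hom x (h y) * φ y z' := mul_mono_right' _ (hφ.2 _ _ _)

theorem IsDist.dComp_fCostar_const {a : VCatStr V X} {c : VCatStr V Z} {Ψ : X → Z → V}
    (hΨ : IsDist a c Ψ) (z : Z) :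
    dComp (fCostar c fun _ : PUnit => z) Ψ = fun x _ => Ψ x z := by
  funext x _
  apply le_antisymm (iSup_le fun z' => hΨ.2 x z' z)
  calc Ψ x z = Ψ x z * 1 := (mul_one _).symm
    _ ≤ Ψ x z * c.hom z z := mul_mono_right' _ (c.refl z)
    _ ≤ ⨆ z', Ψ x z' * c.hom z' z := le_iSup (fun z' => Ψ x z' * c.hom z' z) z

theorem IsDist.inPhi_column {Φ : DistClass V} (hΦ : DistAx Φ) {a : VCatStr V X}
    {c : VCatStr V Z} {Ψ : X → Z → V} (hΨd : IsDist a c Ψ) (hΨ : Φ a c Ψ) (z : Z) :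
    InPhi Φ a (fun x => Ψ x z) := by
  have h := hΦ.ax2_left a (unitCat V) c Ψ (fun _ => z) hΨd (fun _ _ => c.refl z) hΨ
  rwa [hΨd.dComp_fCostar_const z] at h

end Distributors

section Sup

variable {V : Type u} [CommQuantale V] {X Y Z : Type u}

/-- The presheaf `(φ ∘ h^*)(-, z)` on `X`; its supremum is `colim(φ, h)` at `z`. -/
def colimWeight (Φ : DistClass V) (hΦ : DistAx Φ) (a : VCatStr V X) {b : VCatStr V Y}
    {c : VCatStr V Z} {φ : Y → Z → V}
    (hφd : IsDist b c φ) (hφ : Φ b c φ) {h : Y → X} (hh : IsVFunctor b a h) (z : Z) :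
    PhiCarrier Φ a :=
  ⟨fun x => dComp φ (fCostar a h) x z, fun x' x => (hφd.comp_fCostar h).1 x' x z,
    (hφd.comp_fCostar h).inPhi_column hΦ (hΦ.ax2_right b a c φ h hφd hh hφ) z⟩

variable {Φ : DistClass V} {hΦ : DistAx Φ} {a : VCatStr V X} {S : PhiCarrier Φ a → X}

theorem hom_sup_eq (hS : IsVFunctor (phiCat Φ a) a S)
    (hadj : ∀ ψ, (1 : V) ≤ (phiCat Φ a).hom ψ (yPhi Φ hΦ a (S ψ)))
    (hinv : ∀ x, S (yPhi Φ hΦ a x) = x) (ψ : PhiCarrier Φ a) (x : X) :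
    a.hom (S ψ) x = ⨅ x', qhom (ψ.1 x') (a.hom x' x) := by
  apply le_antisymm
  · refine le_iInf fun x' => le_qhom_iff.mpr ?_
    have hψ : ψ.1 x' ≤ a.hom x' (S ψ) :=
      calc ψ.1 x' = ψ.1 x' * 1 := (mul_one _).symm
        _ ≤ ψ.1 x' * qhom (ψ.1 x') (a.hom x' (S ψ)) :=
            mul_mono_right' _ ((hadj ψ).trans (iInf_le _ x'))
        _ ≤ a.hom x' (S ψ) := mul_qhom_le _ _
    exact (mul_mono_left' hψ _).trans (a.comp _ _ _)
  · have h := hS ψ (yPhi Φ hΦ a x)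
    rwa [hinv] at h

theorem hom_sup_phiMap {b : VCatStr V Y} {f : X → Y} (hf : IsVFunctor a b f)
    {S : PhiCarrier Φ b → Y} (hS : IsVFunctor (phiCat Φ b) b S)
    (hadj : ∀ ψ, (1 : V) ≤ (phiCat Φ b).hom ψ (yPhi Φ hΦ b (S ψ)))
    (hinv : ∀ y, S (yPhi Φ hΦ b y) = y) (ψ : PhiCarrier Φ a) (y : Y) :
    b.hom (S (phiMap Φ hΦ a b f hf ψ)) y = ⨅ x, qhom (ψ.1 x) (b.hom (f x) y) := by
  rw [hom_sup_eq hS hadj hinv]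
  exact (b.isPresheaf_hom y).iInf_qhom_iSup_mul f ψ.1

theorem isColimit_sup_colimWeight (hS : IsVFunctor (phiCat Φ a) a S)
    (hadj : ∀ ψ, (1 : V) ≤ (phiCat Φ a).hom ψ (yPhi Φ hΦ a (S ψ)))
    (hinv : ∀ x, S (yPhi Φ hΦ a x) = x) {b : VCatStr V Y} {c : VCatStr V Z}
    {φ : Y → Z → V} (hφd : IsDist b c φ) (hφ : Φ b c φ) {h : Y → X}
    (hh : IsVFunctor b a h) :
    IsColimit b c a φ h fun z => S (colimWeight Φ hΦ a hφd hφ hh z) := by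
  intro z x
  rw [hom_sup_eq hS hadj hinv]
  exact (a.isPresheaf_hom x).iInf_qhom_iSup_mul h _

end Sup

theorem stmt13_general (Φ : DistClass V) (hΦ : DistAx Φ) {X Y : Type u}
    (a : VCatStr V X) (b : VCatStr V Y) (f : X → Y) (hf : IsVFunctor a b f)
    (SX : PhiCarrier Φ a → X) (SY : PhiCarrier Φ b → Y)
    (hSX : IsVFunctor (phiCat Φ a) a SX) (hSY : IsVFunctor (phiCat Φ b) b SY)
    (hSXadj₁ : ∀ ψ, (1 : V) ≤ (phiCat Φ a).hom ψ (yPhi Φ hΦ a (SX ψ)))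
    (hSXinv : ∀ x, SX (yPhi Φ hΦ a x) = x)
    (hSYadj₁ : ∀ ψ, (1 : V) ≤ (phiCat Φ b).hom ψ (yPhi Φ hΦ b (SY ψ)))
    (hSYinv : ∀ y, SY (yPhi Φ hΦ b y) = y) :
    PhiCocontinuous Φ a b f ↔
      VEquiv b (f ∘ SX) (SY ∘ phiMap Φ hΦ a b f hf) := by
  have hSYf := hom_sup_phiMap hf hSY hSYadj₁ hSYinv
  rw [vEquiv_iff_hom_eq]
  constructor
  · intro hcc ψ y
    have hψ : IsColimit a (unitCat V) a (fun x _ => ψ.1 x) id fun _ => SX ψ :=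
      fun _ => hom_sup_eq hSX hSXadj₁ hSXinv ψ
    exact (hcc a _ _ id _ ψ.2.1.isDist ψ.2.2 (fun _ _ => le_rfl) (fun _ _ => a.refl _) hψ
      PUnit.unit y).trans (hSYf ψ y).symm
  · intro hEq _ _ _ _ φ h g hφd hφ hh _ hg z y
    let Ψ := colimWeight Φ hΦ a hφd hφ hh z
    have hgΨ : ∀ x, a.hom (g z) x = a.hom (SX Ψ) x := fun x => by
      rw [hg z x, isColimit_sup_colimWeight hSX hSXadj₁ hSXinv hφd hφ hh z x]
    calc b.hom (f (g z)) y = b.hom (f (SX Ψ)) y := hf.hom_map_eq_of_hom_eq hgΨ y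
      _ = ⨅ x, qhom (Ψ.1 x) (b.hom (f x) y) := (hEq Ψ y).trans (hSYf Ψ y)
      _ = ⨅ y', qhom (φ y' z) (b.hom (f (h y')) y) :=
          ((b.isPresheaf_hom y).comp hf).iInf_qhom_iSup_mul h _

/-- `f` between `Φ`-cocomplete categories is `Φ`-cocontinuous iff
`f ∘ Sup^Φ_X ≅ Sup^Φ_Y ∘ Φf`. -/
theorem stmt13 (Φ : DistClass V) (hΦ : DistAx Φ) {X Y : Type u}
    (a : VCatStr V X) (b : VCatStr V Y) (f : X → Y) (hf : IsVFunctor a b f)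
    (hXc : PhiCocomplete Φ a) (hYc : PhiCocomplete Φ b)
    (SX : PhiCarrier Φ a → X) (SY : PhiCarrier Φ b → Y)
    (hSX : IsVFunctor (phiCat Φ a) a SX) (hSY : IsVFunctor (phiCat Φ b) b SY)
    (hSXadj₁ : ∀ ψ, (1 : V) ≤ (phiCat Φ a).hom ψ (yPhi Φ hΦ a (SX ψ)))
    (hSXadj₂ : ∀ x, (1 : V) ≤ a.hom (SX (yPhi Φ hΦ a x)) x)
    (hSXinv : ∀ x, SX (yPhi Φ hΦ a x) = x)
    (hSYadj₁ : ∀ ψ, (1 : V) ≤ (phiCat Φ b).hom ψ (yPhi Φ hΦ b (SY ψ)))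
    (hSYadj₂ : ∀ y, (1 : V) ≤ b.hom (SY (yPhi Φ hΦ b y)) y)
    (hSYinv : ∀ y, SY (yPhi Φ hΦ b y) = y) :
    PhiCocontinuous Φ a b f ↔
      VEquiv b (f ∘ SX) (SY ∘ phiMap Φ hΦ a b f hf) :=
  stmt13_general Φ hΦ a b f hf SX SY hSX hSY hSXadj₁ hSXinv hSYadj₁ hSYinv
end

section
/- Let V be a commutative unital quantale, Φ a class of V-distributors satisfying (Ax1)–(Ax3), and f : (X,a) → (Y,b) a Φ-cocontinuous V-functor between Φ-cocomplete V-categories. Then f is Φ-dense if and only if f is a left adjoint V-functor. -/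
universe u

variable {V : Type u} [CommQuantale V]

/-!
If `f_* ∈ Φ`, cocompleteness of `X` provides `g = colim(f_*, 1_X)`. Its universal property,
evaluated at the weight `f_* x (f x) ≥ k`, gives the unit `1_X ≤ g ∘ f`; cocontinuity of `f`
makes `f ∘ g = colim(f_*, f)`, whose universal property gives the counit `f ∘ g ≤ 1_Y`.
Conversely, an adjunction `f ⊣ g` identifies `f_*` with `g^*`, which lies in `Φ` by (Ax1).
-/

theorem qhom_le_of_one_le {u : V} (h : (1 : V) ≤ u) (v : V) : qhom u v ≤ v :=
  calc qhom u v = 1 * qhom u v := (one_mul _).symm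
    _ ≤ u * qhom u v := mul_mono_left' h _
    _ ≤ v := le_qhom_iff.mp le_rfl

section Colimit

variable {Y Z X : Type u} {b : VCatStr V Y} {c : VCatStr V Z} {a : VCatStr V X}
  {φ : Y → Z → V} {h : Y → X} {g : Z → X}

theorem IsColimit.hom_le_of_one_le_weight (hg : IsColimit b c a φ h g) {y : Y} {z : Z}
    (hφ : (1 : V) ≤ φ y z) (x : X) : a.hom (g z) x ≤ a.hom (h y) x := by
  rw [hg z x]
  exact (iInf_le _ y).trans (qhom_le_of_one_le hφ _)

theorem IsColimit.one_le_hom_of_weight_le (hg : IsColimit b c a φ h g) {z : Z} {x : X}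
    (hφ : ∀ y, φ y z ≤ a.hom (h y) x) : (1 : V) ≤ a.hom (g z) x := by
  rw [hg z x]
  exact le_iInf fun y => le_qhom_iff.mpr ((mul_one _).trans_le (hφ y))

end Colimit

section Functor

variable {X Y : Type u} {a : VCatStr V X} {b : VCatStr V Y} {f : X → Y}

theorem isDist_fStar (hf : IsVFunctor a b f) : IsDist a b (fStar b f) :=
  ⟨fun x' x _ => (mul_mono_left' (hf x' x) _).trans (b.comp _ _ _),
    fun _ _ _ => b.comp _ _ _⟩

theorem fStar_eq_fCostar_of_adjoint (hf : IsVFunctor a b f) {g : Y → X} (hg : IsVFunctor b a g)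
    (hunit : ∀ x, (1 : V) ≤ a.hom x (g (f x))) (hcounit : ∀ y, (1 : V) ≤ b.hom (f (g y)) y) :
    fStar b f = fCostar a g := by
  funext x y
  apply le_antisymm
  · calc b.hom (f x) y = 1 * b.hom (f x) y := (one_mul _).symm
      _ ≤ a.hom x (g (f x)) * a.hom (g (f x)) (g y) :=
        (mul_mono_left' (hunit x) _).trans (mul_mono_right' _ (hg (f x) y))
      _ ≤ a.hom x (g y) := a.comp _ _ _
  · calc a.hom x (g y) = a.hom x (g y) * 1 := (mul_one _).symm
      _ ≤ b.hom (f x) (f (g y)) * b.hom (f (g y)) y :=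
        (mul_mono_left' (hf x (g y)) _).trans (mul_mono_right' _ (hcounit y))
      _ ≤ b.hom (f x) y := b.comp _ _ _

theorem leftAdjointF_of_phiDense {Φ : DistClass V} (hf : IsVFunctor a b f)
    (hXc : PhiCocomplete Φ a) (hcc : PhiCocontinuous Φ a b f) (hd : PhiDense Φ a b f) :
    LeftAdjointF a b f := by
  have hid : IsVFunctor a a id := fun _ _ => le_rfl
  obtain ⟨g, hg, hcol⟩ := hXc a b (fStar b f) id (isDist_fStar hf) hd hid
  have hfcol : IsColimit a b b (fStar b f) f (f ∘ g) :=
    hcc a b (fStar b f) id g (isDist_fStar hf) hd hid hg hcol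
  refine ⟨g, hg, fun x => ?_, fun y => hfcol.one_le_hom_of_weight_le fun _ => le_rfl⟩
  exact (a.refl _).trans (hcol.hom_le_of_one_le_weight (b.refl (f x)) _)

theorem phiDense_of_leftAdjointF {Φ : DistClass V} (hΦ : DistAx Φ) (hf : IsVFunctor a b f)
    (hl : LeftAdjointF a b f) : PhiDense Φ a b f := by
  obtain ⟨g, hg, hunit, hcounit⟩ := hl
  rw [PhiDense, fStar_eq_fCostar_of_adjoint hf hg hunit hcounit]
  exact hΦ.ax1 b a g hg

end Functor

theorem stmt14_general (Φ : DistClass V) (hΦ : DistAx Φ) {X Y : Type u}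
    (a : VCatStr V X) (b : VCatStr V Y) (f : X → Y) (hf : IsVFunctor a b f)
    (hXc : PhiCocomplete Φ a)
    (hcc : PhiCocontinuous Φ a b f) :
    PhiDense Φ a b f ↔ LeftAdjointF a b f :=
  ⟨leftAdjointF_of_phiDense hf hXc hcc, phiDense_of_leftAdjointF hΦ hf⟩

/-- A `Φ`-cocontinuous functor between `Φ`-cocomplete categories is `Φ`-dense iff
it is a left adjoint. -/
theorem stmt14 (Φ : DistClass V) (hΦ : DistAx Φ) {X Y : Type u}
    (a : VCatStr V X) (b : VCatStr V Y) (f : X → Y) (hf : IsVFunctor a b f)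
    (hXc : PhiCocomplete Φ a) (hYc : PhiCocomplete Φ b)
    (hcc : PhiCocontinuous Φ a b f) :
    PhiDense Φ a b f ↔ LeftAdjointF a b f :=
  stmt14_general Φ hΦ a b f hf hXc hcc
end
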